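/- Let (E, ‖·‖) be a real normed vector space, n ≥ 1, L ≥ 0, and let P_0, P_1, P_2, … be doubly stochastic real n×n matrices. For each i ∈ {1,…,n} and each time t ≥ 0 let g_i(t) ∈ E satisfy ‖g_i(t)‖ ≤ L, and define z_i(0) = 0 and z_i(t+1) = Σ_{j=1}^n [P_t]_{ji} z_j(t) + g_i(t). Let z̄(t) = (1/n) Σ_{j=1}^n z_j(t). Assume the sequence ‖P_t − J‖ is nonincreasing in t, and let T and δ be positive integers such that ∏_{k=0}^{δ−1} ‖P_k − J‖ ≤ 1/(T√n). Then for every t with 1 ≤ t ≤ T and every i ∈ {1,…,n}, ‖z̄(t) − z_i(t)‖ ≤ 3L + 2Lδ. -/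

import Mathlib

open Matrix

/-- Eigenvalues of a Hermitian matrix sorted in ascending order:
`eigAsc hM 0` is the smallest eigenvalue and `eigAsc hM (n-1)` the largest. -/
noncomputable def eigAsc {n : ℕ} {M : Matrix (Fin n) (Fin n) ℝ} (hM : M.IsHermitian) : Fin n → ℝ :=
  hM.eigenvalues ∘ Tuple.sort hM.eigenvalues

/-- The ℓ² operator (spectral) norm of a real square matrix. -/
noncomputable def specNorm {n : ℕ} (M : Matrix (Fin n) (Fin n) ℝ) : ℝ :=
  ‖Matrix.toEuclideanCLM (𝕜 := ℝ) M‖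

/-- A real square matrix is doubly stochastic if its entries are nonnegative and
all row sums and column sums equal one. -/
def DoublyStochastic {n : ℕ} (M : Matrix (Fin n) (Fin n) ℝ) : Prop :=
  (∀ i j, 0 ≤ M i j) ∧ (∀ i, ∑ j, M i j = 1) ∧ (∀ j, ∑ i, M i j = 1)

/-- The matrix `J = (1/n) 𝟙𝟙ᵀ` with all entries equal to `1/n`. -/
noncomputable def Jmat (n : ℕ) : Matrix (Fin n) (Fin n) ℝ := Matrix.of fun _ _ => (n : ℝ)⁻¹

/-!
Unrolling the recursion gives `z i t - z̄ t = ∑_{s<t} ∑_j (Φ(s+1,t) - J) j i • g j s`, where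
`Φ(s,t) = P s ⋯ P (t-1)`. For doubly stochastic `A, B` one has `(A - J)(B - J) = AB - J`, so
`‖Φ(s,t) - J‖ ≤ ∏_{s ≤ k < t} ‖P k - J‖`; as every factor is at most `1` and the factors
decrease, this is at most `∏_{k<δ} ‖P k - J‖ ≤ 1/(T√n)` once `t - s ≥ δ`, and a column of
`Φ(s,t) - J` then has `ℓ¹`-norm at most `1/T`. The (at most `T`) well-mixed terms thus contribute
at most `L`, and each of the remaining `δ` terms at most `2L`.
-/

open scoped Matrix.Norms.L2Operator
open Finset

lemma specNorm_eq_l2_opNorm {n : ℕ} (M : Matrix (Fin n) (Fin n) ℝ) : specNorm M = ‖M‖ := rfl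

lemma doublyStochastic_iff_mem_doublyStochastic {n : ℕ} {M : Matrix (Fin n) (Fin n) ℝ} :
    DoublyStochastic M ↔ M ∈ doublyStochastic ℝ (Fin n) :=
  mem_doublyStochastic_iff_sum.symm

lemma Matrix.sum_abs_apply_le_sqrt_card_mul_l2_opNorm {ι : Type*} [Fintype ι] [DecidableEq ι]
    (A : Matrix ι ι ℝ) (i : ι) :
    ∑ j, |A j i| ≤ √(Fintype.card ι) * ‖A‖ := by
  set x := toEuclideanCLM (𝕜 := ℝ) A (EuclideanSpace.single i 1)
  have hx : ∀ j, x j = A j i := fun j => by simp [x, mulVec, dotProduct]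
  have hxA : ‖x‖ ≤ ‖A‖ := by
    simpa [x, cstar_norm_def] using
      (toEuclideanCLM (𝕜 := ℝ) A).le_opNorm (EuclideanSpace.single i 1)
  have hl1 : (∑ j, |x j|) ^ 2 ≤ Fintype.card ι * ‖x‖ ^ 2 := by
    simpa [EuclideanSpace.norm_sq_eq] using sq_sum_le_card_mul_sum_sq (s := univ) (f := (|x ·|))
  simp only [← hx]
  calc ∑ j, |x j| ≤ √(Fintype.card ι) * ‖x‖ := by
        rw [← Real.sqrt_sq (norm_nonneg x), ← Real.sqrt_mul (Nat.cast_nonneg _)]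
        exact Real.le_sqrt_of_sq_le hl1
    _ ≤ _ := by gcongr

section Jmat

variable {n : ℕ}

lemma mul_Jmat_of_mem_doublyStochastic {M : Matrix (Fin n) (Fin n) ℝ}
    (hM : M ∈ doublyStochastic ℝ (Fin n)) : M * Jmat n = Jmat n := by
  ext i k
  simp [Jmat, mul_apply, ← sum_mul, sum_row_of_mem_doublyStochastic hM]

lemma Jmat_mul_of_mem_doublyStochastic {M : Matrix (Fin n) (Fin n) ℝ}
    (hM : M ∈ doublyStochastic ℝ (Fin n)) : Jmat n * M = Jmat n := by
  ext i k
  simp [Jmat, mul_apply, ← mul_sum, sum_col_of_mem_doublyStochastic hM]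

lemma isStarProjection_Jmat : IsStarProjection (Jmat n) where
  isIdempotentElem := by
    ext i k
    have hn : (n : ℝ) ≠ 0 := by exact_mod_cast i.pos.ne'
    simp [Jmat, mul_apply]
    field_simp
  isSelfAdjoint := by
    ext i k
    simp [Jmat]

lemma sub_Jmat_mul_sub_Jmat {A B : Matrix (Fin n) (Fin n) ℝ}
    (hA : A ∈ doublyStochastic ℝ (Fin n)) (hB : B ∈ doublyStochastic ℝ (Fin n)) :
    (A - Jmat n) * (B - Jmat n) = A * B - Jmat n := by
  rw [sub_mul, mul_sub, mul_sub, mul_Jmat_of_mem_doublyStochastic hA,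
    Jmat_mul_of_mem_doublyStochastic hB, isStarProjection_Jmat.isIdempotentElem.eq]
  abel

lemma norm_sub_Jmat_le_one {M : Matrix (Fin n) (Fin n) ℝ}
    (hM : M ∈ doublyStochastic ℝ (Fin n)) : ‖M - Jmat n‖ ≤ 1 := by
  have hfactor : M - Jmat n = M * (1 - Jmat n) := by
    rw [mul_sub, mul_one, mul_Jmat_of_mem_doublyStochastic hM]
  calc ‖M - Jmat n‖ ≤ ‖M‖ * ‖1 - Jmat n‖ := hfactor ▸ norm_mul_le _ _
    _ ≤ 1 * 1 := by
      gcongr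
      · exact l2_opNorm_le_one_of_mem_doublyStochastic hM
      · exact isStarProjection_Jmat.one_sub.norm_le
    _ = 1 := one_mul 1

lemma sum_abs_sub_Jmat_apply_le_two {M : Matrix (Fin n) (Fin n) ℝ}
    (hM : M ∈ doublyStochastic ℝ (Fin n)) (i : Fin n) : ∑ j, |(M - Jmat n) j i| ≤ 2 := by
  have hn : (n : ℝ) ≠ 0 := by exact_mod_cast i.pos.ne'
  calc ∑ j, |(M - Jmat n) j i| ≤ ∑ j, (M j i + (n : ℝ)⁻¹) := by
        gcongr with j
        simpa [Jmat, abs_of_nonneg (nonneg_of_mem_doublyStochastic hM)] using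
          abs_sub (M j i) (n : ℝ)⁻¹
    _ = 2 := by
        rw [sum_add_distrib, sum_col_of_mem_doublyStochastic hM]
        simp [hn]
        norm_num

end Jmat

/-- `transitionMatrix P s t = P s * P (s + 1) * ⋯ * P (t - 1)`, and `1` when `t ≤ s`. -/
noncomputable def transitionMatrix {n : ℕ} (P : ℕ → Matrix (Fin n) (Fin n) ℝ) (s t : ℕ) :
    Matrix (Fin n) (Fin n) ℝ :=
  ((List.range' s (t - s)).map P).prod

section transitionMatrix

variable {n : ℕ} {P : ℕ → Matrix (Fin n) (Fin n) ℝ}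

@[simp]
lemma transitionMatrix_self (s : ℕ) : transitionMatrix P s s = 1 := by
  simp [transitionMatrix]

lemma transitionMatrix_succ_right {s t : ℕ} (h : s ≤ t) :
    transitionMatrix P s (t + 1) = transitionMatrix P s t * P t := by
  rw [transitionMatrix, transitionMatrix, show t + 1 - s = t - s + 1 by omega,
    List.range'_concat, List.map_append, List.prod_append, show s + 1 * (t - s) = t by omega]
  simp

lemma transitionMatrix_mem_doublyStochastic (hP : ∀ t, P t ∈ doublyStochastic ℝ (Fin n))
    (s t : ℕ) : transitionMatrix P s t ∈ doublyStochastic ℝ (Fin n) :=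
  list_prod_mem (List.forall_mem_map.2 fun k _ => hP k)

lemma norm_transitionMatrix_sub_Jmat_le_prod (hP : ∀ t, P t ∈ doublyStochastic ℝ (Fin n))
    {s t : ℕ} (h : s ≤ t) :
    ‖transitionMatrix P s t - Jmat n‖ ≤ ∏ k ∈ Ico s t, ‖P k - Jmat n‖ := by
  induction t, h using Nat.le_induction with
  | base => simpa using norm_sub_Jmat_le_one (one_mem _)
  | succ t hst ih =>
    rw [transitionMatrix_succ_right hst,
      ← sub_Jmat_mul_sub_Jmat (transitionMatrix_mem_doublyStochastic hP s t) (hP t),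
      prod_Ico_succ_top hst]
    exact (norm_mul_le _ _).trans (by gcongr)

lemma prod_Ico_le_prod_range_of_antitone {f : ℕ → ℝ} (hf : Antitone f) (h0 : ∀ k, 0 ≤ f k)
    (h1 : ∀ k, f k ≤ 1) {a b δ : ℕ} (h : a + δ ≤ b) :
    ∏ k ∈ Ico a b, f k ≤ ∏ k ∈ range δ, f k := by
  rw [← prod_Ico_consecutive f (Nat.le_add_right a δ) h, prod_Ico_eq_prod_range,
    Nat.add_sub_cancel_left]
  calc (∏ k ∈ range δ, f (a + k)) * ∏ k ∈ Ico (a + δ) b, f k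
      ≤ (∏ k ∈ range δ, f (a + k)) * 1 := by
        gcongr
        · exact prod_nonneg fun k _ => h0 _
        · exact prod_le_one (fun k _ => h0 k) fun k _ => h1 k
    _ ≤ ∏ k ∈ range δ, f k := by
        rw [mul_one]
        exact prod_le_prod (fun k _ => h0 _) fun k _ => hf (Nat.le_add_left k a)

lemma norm_transitionMatrix_sub_Jmat_le_prod_range
    (hP : ∀ t, P t ∈ doublyStochastic ℝ (Fin n)) (hmono : Antitone fun t => ‖P t - Jmat n‖)
    {s t δ : ℕ} (h : s + δ ≤ t) :
    ‖transitionMatrix P s t - Jmat n‖ ≤ ∏ k ∈ range δ, ‖P k - Jmat n‖ :=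
  (norm_transitionMatrix_sub_Jmat_le_prod hP (by omega)).trans <|
    prod_Ico_le_prod_range_of_antitone hmono (fun _ => norm_nonneg _)
      (fun k => norm_sub_Jmat_le_one (hP k)) h

end transitionMatrix

section Recursion

variable {E : Type*} [AddCommGroup E] [Module ℝ E] {n : ℕ}
  {P : ℕ → Matrix (Fin n) (Fin n) ℝ} {g z : Fin n → ℕ → E}

lemma eq_sum_transitionMatrix_smul (hz0 : ∀ i, z i 0 = 0)
    (hzrec : ∀ i t, z i (t + 1) = (∑ j, P t j i • z j t) + g i t) (t : ℕ) (i : Fin n) :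
    z i t = ∑ s ∈ range t, ∑ j, transitionMatrix P (s + 1) t j i • g j s := by
  induction t generalizing i with
  | zero => simp [hz0]
  | succ t ih =>
    rw [hzrec, sum_range_succ, transitionMatrix_self]
    congr 1
    · simp_rw [ih, smul_sum, smul_smul]
      rw [sum_comm]
      refine sum_congr rfl fun s hs => ?_
      rw [sum_comm]
      refine sum_congr rfl fun k _ => ?_
      rw [← sum_smul, transitionMatrix_succ_right (mem_range.1 hs), mul_apply]
      simp_rw [mul_comm]
    · simp [one_apply, ite_smul]

lemma sub_average_eq_sum_smul (hP : ∀ t, P t ∈ doublyStochastic ℝ (Fin n))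
    (hz0 : ∀ i, z i 0 = 0) (hzrec : ∀ i t, z i (t + 1) = (∑ j, P t j i • z j t) + g i t)
    (t : ℕ) (i : Fin n) :
    z i t - (n : ℝ)⁻¹ • ∑ k, z k t =
      ∑ s ∈ range t, ∑ j, (transitionMatrix P (s + 1) t - Jmat n) j i • g j s := by
  have hsum : ∑ k, z k t = ∑ s ∈ range t, ∑ j, g j s := by
    simp_rw [eq_sum_transitionMatrix_smul hz0 hzrec t]
    rw [sum_comm]
    refine sum_congr rfl fun s _ => ?_
    rw [sum_comm]
    refine sum_congr rfl fun j _ => ?_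
    rw [← sum_smul, sum_row_of_mem_doublyStochastic
      (transitionMatrix_mem_doublyStochastic hP _ _), one_smul]
  simp_rw [hsum, eq_sum_transitionMatrix_smul hz0 hzrec t i, smul_sum, ← sum_sub_distrib,
    Matrix.sub_apply, sub_smul, Jmat, of_apply]

end Recursion

lemma norm_sum_smul_le {ι E : Type*} [SeminormedAddCommGroup E] [NormedSpace ℝ E]
    (s : Finset ι) (a : ι → ℝ) {v : ι → E} {L : ℝ} (hv : ∀ j, ‖v j‖ ≤ L) :
    ‖∑ j ∈ s, a j • v j‖ ≤ (∑ j ∈ s, |a j|) * L := by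
  rw [sum_mul]
  refine (norm_sum_le _ _).trans (sum_le_sum fun j _ => ?_)
  rw [norm_smul, Real.norm_eq_abs]
  gcongr
  exact hv j

lemma sum_range_le_of_le_of_forall_add_lt {c : ℕ → ℝ} {a b : ℝ} {t δ : ℕ} (ha : 0 ≤ a)
    (hb : 0 ≤ b) (hcb : ∀ s, c s ≤ b) (hca : ∀ s, s + δ < t → c s ≤ a) :
    ∑ s ∈ range t, c s ≤ t * a + δ * b := by
  rw [← sum_range_add_sum_Ico c (Nat.sub_le t δ)]
  gcongr
  · calc ∑ s ∈ range (t - δ), c s ≤ ∑ s ∈ range (t - δ), a :=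
          sum_le_sum fun s hs => hca s (by have := mem_range.1 hs; omega)
      _ ≤ t * a := by
          rw [sum_const, card_range, nsmul_eq_mul]
          gcongr
          exact_mod_cast Nat.sub_le t δ
  · calc ∑ s ∈ Ico (t - δ) t, c s ≤ ∑ s ∈ Ico (t - δ) t, b := sum_le_sum fun s _ => hcb s
      _ ≤ δ * b := by
          rw [sum_const, Nat.card_Ico, nsmul_eq_mul]
          gcongr
          exact_mod_cast (by omega : t - (t - δ) ≤ δ)

theorem stmt7_general {E : Type*} [NormedAddCommGroup E] [NormedSpace ℝ E]
    {n : ℕ} (L : ℝ)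
    (P : ℕ → Matrix (Fin n) (Fin n) ℝ) (hP : ∀ t, DoublyStochastic (P t))
    (g : Fin n → ℕ → E) (hg : ∀ i t, ‖g i t‖ ≤ L)
    (z : Fin n → ℕ → E)
    (hz0 : ∀ i, z i 0 = 0)
    (hzrec : ∀ i t, z i (t + 1) = (∑ j, P t j i • z j t) + g i t)
    (zbar : ℕ → E) (hzbar : ∀ t, zbar t = (n : ℝ)⁻¹ • ∑ j, z j t)
    (hmono : Antitone fun t => specNorm (P t - Jmat n))
    (T δ : ℕ)
    (hprod : ∏ k ∈ Finset.range δ, specNorm (P k - Jmat n) ≤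
      1 / ((T : ℝ) * Real.sqrt n)) :
    ∀ t, 1 ≤ t → t ≤ T → ∀ i,
      ‖zbar t - z i t‖ ≤ 3 * L + 2 * L * (δ : ℝ) := by
  intro t ht htT i
  simp only [doublyStochastic_iff_mem_doublyStochastic, specNorm_eq_l2_opNorm] at hP hmono hprod
  have hn : (0 : ℝ) < n := by exact_mod_cast i.pos
  have hT : (0 : ℝ) < T := by exact_mod_cast ht.trans htT
  have hL : 0 ≤ L := (norm_nonneg _).trans (hg i 0)
  set dev := fun s => ∑ j, |(transitionMatrix P (s + 1) t - Jmat n) j i|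
  have hdev_le_two : ∀ s, dev s ≤ 2 := fun s =>
    sum_abs_sub_Jmat_apply_le_two (transitionMatrix_mem_doublyStochastic hP _ _) i
  have hdev_mixed : ∀ s, s + δ < t → dev s ≤ 1 / T := fun s hs => calc
    dev s ≤ √n * ‖transitionMatrix P (s + 1) t - Jmat n‖ := by
        simpa using sum_abs_apply_le_sqrt_card_mul_l2_opNorm _ i
    _ ≤ √n * (1 / (T * √n)) := by
        gcongr
        exact (norm_transitionMatrix_sub_Jmat_le_prod_range hP hmono (by omega)).trans hprod
    _ = 1 / T := by field_simp
  rw [hzbar, norm_sub_rev, sub_average_eq_sum_smul hP hz0 hzrec]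
  calc ‖∑ s ∈ range t, ∑ j, (transitionMatrix P (s + 1) t - Jmat n) j i • g j s‖
      ≤ ∑ s ∈ range t, dev s * L :=
        (norm_sum_le _ _).trans (sum_le_sum fun s _ => norm_sum_smul_le _ _ (hg · s))
    _ ≤ t * (L / T) + δ * (2 * L) :=
        sum_range_le_of_le_of_forall_add_lt (by positivity) (by positivity)
          (fun s => by grw [hdev_le_two s])
          (fun s hs => by grw [hdev_mixed s hs]; rw [one_div_mul_eq_div])
    _ ≤ T * (L / T) + δ * (2 * L) := by gcongr
    _ ≤ 3 * L + 2 * L * δ := by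
        rw [mul_div_cancel₀ _ hT.ne']
        linarith

/-- The key bound (50) in the proof of Proposition 2: over an evolving network with
nonincreasing second-largest singular values, if the mixing-time product condition
`∏_{k<δ} ‖P_k - J‖ ≤ 1/(T√n)` holds, then each agent's dual variable stays within
`3L + 2Lδ` of the network average. -/
theorem stmt7 {E : Type*} [NormedAddCommGroup E] [NormedSpace ℝ E]
    {n : ℕ} (hn : 1 ≤ n) (L : ℝ) (hL : 0 ≤ L)
    (P : ℕ → Matrix (Fin n) (Fin n) ℝ) (hP : ∀ t, DoublyStochastic (P t))
    (g : Fin n → ℕ → E) (hg : ∀ i t, ‖g i t‖ ≤ L)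
    (z : Fin n → ℕ → E)
    (hz0 : ∀ i, z i 0 = 0)
    (hzrec : ∀ i t, z i (t + 1) = (∑ j, P t j i • z j t) + g i t)
    (zbar : ℕ → E) (hzbar : ∀ t, zbar t = (n : ℝ)⁻¹ • ∑ j, z j t)
    (hmono : Antitone fun t => specNorm (P t - Jmat n))
    (T δ : ℕ) (hT : 1 ≤ T) (hδ : 1 ≤ δ)
    (hprod : ∏ k ∈ Finset.range δ, specNorm (P k - Jmat n) ≤
      1 / ((T : ℝ) * Real.sqrt n)) :
    ∀ t, 1 ≤ t → t ≤ T → ∀ i,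
      ‖zbar t - z i t‖ ≤ 3 * L + 2 * L * (δ : ℝ) :=
  stmt7_general L P hP g hg z hz0 hzrec zbar hzbar hmono T δ hprod
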